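/- arXiv:1904.04444 — 6 statements merged into one kernel-verified Lean document; each statement's English description precedes it below -/
import Mathlib

section
/- Let L be a finite-dimensional Lie algebra of dimension n over a field, and let C be a Lie algebra admitting a central ideal B with L ≅ C/B, B ⊆ Z(C) ∩ C², and B ∩ {[x,y] : x,y ∈ C} = 0. Then dim C ≤ n(n+1)/2. -/
/-!
Because `B` is central, `⁅a, c⁆` only depends on `a` and `c` modulo `B`. Hence, if
`x₁, …, xₙ` lift a basis of `C ⧸ B`, every bracket lies in the span of the `⁅xᵢ, xⱼ⁆` with
`i < j`. As `B ⊆ C²` and `C²` is spanned by brackets, `dim B ≤ n.choose 2`, so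
`dim C = n + dim B ≤ (n + 1).choose 2 = n (n + 1) / 2`.
-/

open Module Submodule

theorem Submodule.exists_fin_span_range_sup_eq_top {K M : Type*} [DivisionRing K]
    [AddCommGroup M] [Module K M] (p : Submodule K M) [Module.Finite K (M ⧸ p)] :
    ∃ x : Fin (finrank K (M ⧸ p)) → M, span K (Set.range x) ⊔ p = ⊤ := by
  let b := finBasis K (M ⧸ p)
  refine ⟨fun i => Quotient.out (b i), ?_⟩
  rw [sup_comm, ← map_mkQ_eq_top, map_span, ← Set.range_comp, ← b.span_eq]
  congr 2
  ext i
  exact Quotient.mk_out (b i)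

section

variable {K C : Type*} [Field K] [LieRing C] [LieAlgebra K C]

theorem lie_mem_span_image2_of_span_sup_eq_top {I : LieIdeal K C}
    (hI : I ≤ LieAlgebra.center K C) {s : Set C} (hs : span K s ⊔ I = ⊤) (a c : C) :
    ⁅a, c⁆ ∈ span K (Set.image2 (⁅·, ·⁆) s s) := by
  have central (u : C) (hu : u ∈ I) (d : C) : ⁅d, u⁆ = 0 :=
    (LieModule.mem_maxTrivSubmodule K C C u).mp (hI hu) d
  obtain ⟨v, hv, u, hu, rfl⟩ := mem_sup.mp (hs ▸ mem_top : a ∈ span K s ⊔ I)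
  obtain ⟨w, hw, u', hu', rfl⟩ := mem_sup.mp (hs ▸ mem_top : c ∈ span K s ⊔ I)
  have hlie : ⁅v + u, w + u'⁆ = ⁅v, w⁆ := by
    rw [lie_add, add_lie, add_lie, central u' hu', central u' hu', ← lie_skew u, central u hu]
    simp
  have hvw := apply_mem_map₂ (LinearMap.mk₂ K (⁅·, ·⁆) add_lie smul_lie lie_add lie_smul) hv hw
  rw [map₂_span_span] at hvw
  rw [hlie]
  exact hvw

theorem finrank_span_image2_lie_range_le {ι : Type*} [Fintype ι] [LinearOrder ι] (x : ι → C) :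
    finrank K (span K (Set.image2 (⁅·, ·⁆) (Set.range x) (Set.range x))) ≤
      (Fintype.card ι).choose 2 := by
  classical
  let t : Finset C :=
    {p ∈ (Finset.univ ×ˢ Finset.univ : Finset (ι × ι)) | p.1 < p.2}.image fun p => ⁅x p.1, x p.2⁆
  have hle : span K (Set.image2 (⁅·, ·⁆) (Set.range x) (Set.range x)) ≤ span K t := by
    rw [span_le]
    rintro _ ⟨_, ⟨i, rfl⟩, _, ⟨j, rfl⟩, rfl⟩
    dsimp only
    have mem {i j : ι} (hij : i < j) : ⁅x i, x j⁆ ∈ span K (t : Set C) :=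
      subset_span (Finset.mem_image.mpr ⟨(i, j), by simp [hij], rfl⟩)
    rcases lt_trichotomy i j with hij | rfl | hij
    · exact mem hij
    · rw [lie_self]; exact zero_mem _
    · rw [← lie_skew]; exact neg_mem (mem hij)
  calc _ ≤ finrank K (span K (t : Set C)) := finrank_mono hle
    _ ≤ t.card := finrank_span_finset_le_card t
    _ ≤ _ := Finset.card_image_le
    _ = _ := Finset.card_product_filter_lt

theorem LieIdeal.finrank_le_choose_two_of_le_center_inf_derivedSeries (I : LieIdeal K C)
    [Module.Finite K (C ⧸ I)] (hI : I ≤ LieAlgebra.center K C ⊓ LieAlgebra.derivedSeries K C 1) :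
    finrank K C ≤ (finrank K (C ⧸ I) + 1).choose 2 := by
  set n := finrank K (C ⧸ I)
  have : Module.Finite K (C ⧸ (I : Submodule K C)) := ‹Module.Finite K (C ⧸ I)›
  obtain ⟨x, hx⟩ := (I : Submodule K C).exists_fin_span_range_sup_eq_top
  set S := span K (Set.image2 (⁅·, ·⁆) (Set.range x) (Set.range x))
  have : FiniteDimensional K S :=
    FiniteDimensional.span_of_finite K ((Set.finite_range x).image2 _ (Set.finite_range x))
  have hIS : (I : Submodule K C) ≤ S := by
    intro m hm
    have hm' : m ∈ (LieAlgebra.derivedSeries K C 1 : Submodule K C) := (le_inf_iff.mp hI).2 hm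
    rw [LieAlgebra.coe_derivedSeries_one_eq] at hm'
    refine span_le.mpr ?_ hm'
    rintro _ ⟨a, c, rfl⟩
    exact lie_mem_span_image2_of_span_sup_eq_top (le_inf_iff.mp hI).1 hx a c
  have hrank : finrank K (I : Submodule K C) ≤ n.choose 2 :=
    (finrank_mono hIS).trans
      ((finrank_span_image2_lie_range_le x).trans_eq (by rw [Fintype.card_fin]; rfl))
  have : Module.Finite K (I : Submodule K C) := Submodule.finiteDimensional_of_le hIS
  have := Module.Finite.of_submodule_quotient (I : Submodule K C)
  calc finrank K C = n + finrank K (I : Submodule K C) :=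
        (finrank_quotient_add_finrank (I : Submodule K C)).symm
    _ ≤ n + n.choose 2 := by gcongr
    _ = (n + 1).choose 2 := by rw [Nat.choose_succ_succ', Nat.choose_one_right]

end

theorem cp_defining_pair_dim_le_general (K : Type*) [Field K]
    (L : Type*) [LieRing L] [LieAlgebra K L] [Module.Finite K L]
    (C : Type*) [LieRing C] [LieAlgebra K C]
    (n : ℕ) (hn : Module.finrank K L = n)
    (B : LieIdeal K C)
    (hiso : Nonempty ((C ⧸ B) ≃ₗ⁅K⁆ L))
    (hcentral : B ≤ LieAlgebra.center K C ⊓ LieAlgebra.derivedSeries K C 1) :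
    Module.finrank K C ≤ n * (n + 1) / 2 := by
  obtain ⟨e⟩ := hiso
  have : Module.Finite K (C ⧸ B) := .equiv e.symm.toLinearEquiv
  have hdim : finrank K (C ⧸ B) = n := e.toLinearEquiv.finrank_eq.trans hn
  calc finrank K C ≤ (n + 1).choose 2 :=
        hdim ▸ B.finrank_le_choose_two_of_le_center_inf_derivedSeries hcentral
    _ = n * (n + 1) / 2 := by rw [Nat.choose_two_right, Nat.add_sub_cancel, mul_comm]

/-- If `L` is an `n`-dimensional Lie algebra over a field `K` and `(C, B)` is a
CP defining pair for `L` (i.e. `L ≅ C/B`, `B ⊆ Z(C) ∩ C²` and `B ∩ K(C) = 0`), then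
`dim C ≤ n(n+1)/2`. -/
theorem cp_defining_pair_dim_le (K : Type*) [Field K]
    (L : Type*) [LieRing L] [LieAlgebra K L] [Module.Finite K L]
    (C : Type*) [LieRing C] [LieAlgebra K C]
    (n : ℕ) (hn : Module.finrank K L = n)
    (B : LieIdeal K C)
    (hiso : Nonempty ((C ⧸ B) ≃ₗ⁅K⁆ L))
    (hcentral : B ≤ LieAlgebra.center K C ⊓ LieAlgebra.derivedSeries K C 1)
    (hcomm : ∀ x ∈ B, (∃ y z : C, ⁅y, z⁆ = x) → x = 0) :
    Module.finrank K C ≤ n * (n + 1) / 2 :=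
  cp_defining_pair_dim_le_general K L C n hn B hiso hcentral
end

section
/- Let C be a Lie algebra over a field such that the quotient C/Z(C) by its center has finite dimension n. Then the derived subalgebra C² = [C,C] has dimension at most n(n-1)/2. -/
/-!
The bracket vanishes as soon as one argument is central, so it descends to an alternating bilinear
map on `C ⧸ Z(C)`, hence to a linear map `⋀² (C ⧸ Z(C)) → C`. Its image contains every bracket,
so `C²` has dimension at most `dim ⋀² (C ⧸ Z(C)) = n.choose 2 = n(n-1)/2`.
-/

namespace LinearMap

variable {R M N : Type*} [CommSemiring R] [AddCommMonoid M] [AddCommMonoid N]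
  [Module R M] [Module R N]

def IsAlt.toAlternatingMap {f : M →ₗ[R] M →ₗ[R] N} (hf : f.IsAlt) : M [⋀^Fin 2]→ₗ[R] N where
  toFun v := f (v 0) (v 1)
  map_update_add' v i x y := by
    fin_cases i <;> simp
  map_update_smul' v i c x := by
    fin_cases i <;> simp
  map_eq_zero_of_eq' v i j hv hij := by
    fin_cases i <;> fin_cases j <;> simp_all [hf (v 0), hf (v 1)]

@[simp]
lemma IsAlt.toAlternatingMap_apply {f : M →ₗ[R] M →ₗ[R] N} (hf : f.IsAlt) (v : Fin 2 → M) :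
    hf.toAlternatingMap v = f (v 0) (v 1) :=
  rfl

end LinearMap

namespace LieAlgebra

variable (R C : Type*) [CommRing R] [LieRing C] [LieAlgebra R C]

lemma isAlt_ad : (ad R C : C →ₗ[R] C →ₗ[R] C).IsAlt :=
  lie_self

lemma toSubmodule_center_eq_ker_ad :
    (center R C).toSubmodule = LinearMap.ker (ad R C : C →ₗ[R] C →ₗ[R] C) := by
  rw [← self_module_ker_eq_center]
  rfl

def centerQuotientBracket : C ⧸ center R C →ₗ[R] C ⧸ center R C →ₗ[R] C :=
  LinearMap.IsRefl.liftQ₂ _ _ (isAlt_ad R C).isRefl (toSubmodule_center_eq_ker_ad R C).le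

@[simp]
lemma centerQuotientBracket_mk (x y : C) :
    centerQuotientBracket R C (LieSubmodule.Quotient.mk x) (LieSubmodule.Quotient.mk y) = ⁅x, y⁆ :=
  rfl

lemma isAlt_centerQuotientBracket : (centerQuotientBracket R C).IsAlt := by
  intro x
  obtain ⟨x, rfl⟩ := LieSubmodule.Quotient.surjective_mk' (center R C) x
  exact lie_self x

noncomputable def centerQuotientBracketLift : ⋀[R]^2 (C ⧸ center R C) →ₗ[R] C :=
  exteriorPower.alternatingMapLinearEquiv (isAlt_centerQuotientBracket R C).toAlternatingMap

lemma derivedSeries_one_le_range_centerQuotientBracketLift :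
    (derivedSeries R C 1).toSubmodule ≤ LinearMap.range (centerQuotientBracketLift R C) := by
  rw [derivedSeries_def, derivedSeriesOfIdeal_succ, derivedSeriesOfIdeal_zero,
    LieSubmodule.lieIdeal_oper_eq_linear_span', Submodule.span_le]
  rintro - ⟨x, -, y, -, rfl⟩
  refine ⟨exteriorPower.ιMulti R 2 ![LieSubmodule.Quotient.mk x, LieSubmodule.Quotient.mk y], ?_⟩
  simp [centerQuotientBracketLift]

end LieAlgebra

/-- If the quotient of a Lie algebra `C` over a field by its center has finite
dimension `n`, then the derived subalgebra `C² = [C,C]` has dimension at most `n(n-1)/2`. -/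
theorem derived_dim_le_of_center_quotient (K : Type*) [Field K]
    (C : Type*) [LieRing C] [LieAlgebra K C]
    (n : ℕ) [Module.Finite K (C ⧸ LieAlgebra.center K C)]
    (hn : Module.finrank K (C ⧸ LieAlgebra.center K C) = n) :
    Module.finrank K (LieAlgebra.derivedSeries K C 1) ≤ n * (n - 1) / 2 := by
  calc Module.finrank K (LieAlgebra.derivedSeries K C 1)
      ≤ Module.finrank K (LinearMap.range (LieAlgebra.centerQuotientBracketLift K C)) :=
        Submodule.finrank_mono (LieAlgebra.derivedSeries_one_le_range_centerQuotientBracketLift K C)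
    _ ≤ Module.finrank K (⋀[K]^2 (C ⧸ LieAlgebra.center K C)) := LinearMap.finrank_range_le _
    _ = n * (n - 1) / 2 := by rw [exteriorPower.finrank_eq, hn, Nat.choose_two_right]
end

section
/- Let L be a Lie algebra with free presentation L ≅ F/R. Define A = R/⟨K(F) ∩ R⟩, D = (F² ∩ R)/⟨K(F) ∩ R⟩, and E ≅ R/(R ∩ F²). Then A is a central extension of D by the abelian Lie algebra E which splits, so A ≅ D ⊕ E. -/
section ProdLie

variable (K : Type*) [CommRing K]
variable (M N : Type*) [LieRing M] [LieAlgebra K M] [LieRing N] [LieAlgebra K N]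

/-- The product of two Lie rings, with componentwise bracket. -/
instance Prod.instLieRing : LieRing (M × N) where
  bracket x y := (⁅x.1, y.1⁆, ⁅x.2, y.2⁆)
  add_lie x y z := Prod.ext (add_lie x.1 y.1 z.1) (add_lie x.2 y.2 z.2)
  lie_add x y z := Prod.ext (lie_add x.1 y.1 z.1) (lie_add x.2 y.2 z.2)
  lie_self x := Prod.ext (lie_self x.1) (lie_self x.2)
  leibniz_lie x y z := Prod.ext (leibniz_lie x.1 y.1 z.1) (leibniz_lie x.2 y.2 z.2)

/-- The product of two Lie algebras. -/
instance Prod.instLieAlgebra : LieAlgebra K (M × N) where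
  lie_smul t x y := Prod.ext (lie_smul t x.1 y.1) (lie_smul t x.2 y.2)

end ProdLie

/-!
Since every commutator `⁅x, y⁆` with `x ∈ R` lies in `J = ⟨K(F) ∩ R⟩`, the bracket of `R/J`
vanishes, so `A = R/J`, its ideal `D = (F² ∩ R)/J` and the quotient `A/D ≅ R/(R ∩ F²)` are all
abelian. A Lie isomorphism between abelian Lie algebras is just a linear isomorphism, and the
short exact sequence `0 → D → A → E → 0` of vector spaces splits.
-/

theorem Function.Exact.nonempty_linearEquiv_prod {K V₁ V₂ V₃ : Type*} [DivisionRing K]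
    [AddCommGroup V₁] [Module K V₁] [AddCommGroup V₂] [Module K V₂]
    [AddCommGroup V₃] [Module K V₃] {f : V₁ →ₗ[K] V₂} {g : V₂ →ₗ[K] V₃}
    (h : Function.Exact f g) (hf : Function.Injective f) (hg : Function.Surjective g) :
    Nonempty (V₂ ≃ₗ[K] V₁ × V₃) := by
  obtain ⟨l, hl⟩ := f.exists_leftInverse_of_injective (LinearMap.ker_eq_bot.mpr hf)
  exact ⟨(h.splitInjectiveEquiv hg ⟨l, hl⟩).1⟩

section IsLieAbelian

variable {R M N : Type*} [CommRing R] [LieRing M] [LieAlgebra R M] [LieRing N] [LieAlgebra R N]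

instance Prod.isLieAbelian [IsLieAbelian M] [IsLieAbelian N] : IsLieAbelian (M × N) :=
  ⟨fun x y => Prod.ext (trivial_lie_zero M M x.1 y.1) (trivial_lie_zero N N x.2 y.2)⟩

def LinearEquiv.toLieEquiv [IsLieAbelian M] [IsLieAbelian N] (e : M ≃ₗ[R] N) : M ≃ₗ⁅R⁆ N :=
  { e with map_lie' := fun {x y} => by rw [trivial_lie_zero, trivial_lie_zero]; exact e.map_zero }

end IsLieAbelian

namespace LieIdeal

variable {R L : Type*} [CommRing R] [LieRing L] [LieAlgebra R L]

theorem isLieAbelian_quotient_of_forall_lie_mem {I : LieIdeal R L}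
    (h : ∀ x y : L, ⁅x, y⁆ ∈ I) : IsLieAbelian (L ⧸ I) := by
  refine ⟨fun u v => ?_⟩
  obtain ⟨x, rfl⟩ := LieSubmodule.Quotient.surjective_mk' I u
  obtain ⟨y, rfl⟩ := LieSubmodule.Quotient.surjective_mk' I v
  exact (LieSubmodule.Quotient.mk_eq_zero' (N := I)).mpr (h x y)

theorem _root_.LieAlgebra.lie_mem_derivedSeries_one (x y : L) :
    ⁅x, y⁆ ∈ LieAlgebra.derivedSeries R L 1 :=
  LieSubmodule.lie_mem_lie (LieSubmodule.mem_top x) (LieSubmodule.mem_top y)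

def spanCommutatorsIn (I : LieIdeal R L) : LieIdeal R L :=
  LieSubmodule.lieSpan R L {z | (∃ x y : L, ⁅x, y⁆ = z) ∧ z ∈ I}

variable {I S J : LieIdeal R L}

theorem lie_mem_spanCommutatorsIn {x : L} (hx : x ∈ I) (y : L) : ⁅x, y⁆ ∈ I.spanCommutatorsIn :=
  LieSubmodule.subset_lieSpan ⟨⟨x, y, rfl⟩, lie_mem_left R L I x y hx⟩

theorem spanCommutatorsIn_le_derivedSeries_one :
    I.spanCommutatorsIn ≤ LieAlgebra.derivedSeries R L 1 :=
  LieSubmodule.lieSpan_le.mpr fun _ ⟨⟨x, y, hxy⟩, _⟩ =>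
    hxy ▸ LieAlgebra.lie_mem_derivedSeries_one x y

variable (I S J) in
def quotientInfToQuotient : (↥(S ⊓ I) ⧸ comap (S ⊓ I).incl J) →ₗ[R] (↥I ⧸ comap I.incl J) :=
  Submodule.mapQ _ _ (inclusion (inf_le_right : S ⊓ I ≤ I)).toLinearMap fun _ hx => hx

variable (I) in
def quotientFactor (h : J ≤ S) : (↥I ⧸ comap I.incl J) →ₗ[R] (↥I ⧸ comap I.incl S) :=
  Submodule.factor fun _ hx => h hx

theorem quotientInfToQuotient_mk (x : ↥(S ⊓ I)) :
    quotientInfToQuotient I S J (Submodule.Quotient.mk x) = Submodule.Quotient.mk ⟨x, x.2.2⟩ :=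
  rfl

theorem quotientFactor_mk (h : J ≤ S) (x : I) :
    quotientFactor I h (Submodule.Quotient.mk x) = Submodule.Quotient.mk x :=
  rfl

theorem quotientInfToQuotient_injective : Function.Injective (quotientInfToQuotient I S J) := by
  refine (injective_iff_map_eq_zero _).mpr fun d hd => ?_
  obtain ⟨x, rfl⟩ := Submodule.Quotient.mk_surjective _ d
  rw [quotientInfToQuotient_mk, Submodule.Quotient.mk_eq_zero] at hd
  exact (Submodule.Quotient.mk_eq_zero _).mpr hd

theorem quotientFactor_surjective (h : J ≤ S) : Function.Surjective (quotientFactor I h) := by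
  intro e
  obtain ⟨x, rfl⟩ := Submodule.Quotient.mk_surjective _ e
  exact ⟨Submodule.Quotient.mk x, rfl⟩

theorem exact_quotientInfToQuotient_quotientFactor (h : J ≤ S) :
    Function.Exact (quotientInfToQuotient I S J) (quotientFactor I h) := by
  intro a
  obtain ⟨x, rfl⟩ := Submodule.Quotient.mk_surjective _ a
  rw [quotientFactor_mk, Submodule.Quotient.mk_eq_zero]
  refine ⟨fun hx => ⟨Submodule.Quotient.mk ⟨x, hx, x.2⟩, rfl⟩, ?_⟩
  rintro ⟨d, hd⟩
  obtain ⟨y, rfl⟩ := Submodule.Quotient.mk_surjective _ d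
  rw [quotientInfToQuotient_mk, Submodule.Quotient.eq] at hd
  have hyx : (y : L) - x ∈ S := h hd
  have hx : (y : L) - ((y : L) - x) ∈ S := sub_mem y.2.1 hyx
  rwa [sub_sub_cancel] at hx

end LieIdeal

theorem LieIdeal.nonempty_linearEquiv_quotient_prod {K L : Type*} [Field K] [LieRing L]
    [LieAlgebra K L] {I S J : LieIdeal K L} (h : J ≤ S) :
    Nonempty ((↥I ⧸ comap I.incl J) ≃ₗ[K]
      (↥(S ⊓ I) ⧸ comap (S ⊓ I).incl J) × (↥I ⧸ comap I.incl S)) :=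
  (exact_quotientInfToQuotient_quotientFactor h).nonempty_linearEquiv_prod
    quotientInfToQuotient_injective (quotientFactor_surjective h)

theorem hopf_ideal_splits_general
    (K : Type*) [Field K] (X : Type*)
    (R : LieIdeal K (FreeLieAlgebra K X))
    (J : LieIdeal K (FreeLieAlgebra K X))
    (hJ : J = LieSubmodule.lieSpan K (FreeLieAlgebra K X)
      {z | (∃ x y : FreeLieAlgebra K X, ⁅x, y⁆ = z) ∧ z ∈ R}) :
    IsLieAbelian
      (↥R ⧸ LieIdeal.comap R.incl (LieAlgebra.derivedSeries K (FreeLieAlgebra K X) 1)) ∧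
    Nonempty
      ((↥R ⧸ LieIdeal.comap R.incl J) ≃ₗ⁅K⁆
        ((↥(LieAlgebra.derivedSeries K (FreeLieAlgebra K X) 1 ⊓ R) ⧸
            LieIdeal.comap (LieAlgebra.derivedSeries K (FreeLieAlgebra K X) 1 ⊓ R).incl J) ×
          (↥R ⧸ LieIdeal.comap R.incl (LieAlgebra.derivedSeries K (FreeLieAlgebra K X) 1)))) := by
  obtain rfl : J = R.spanCommutatorsIn := hJ
  set F₂ := LieAlgebra.derivedSeries K (FreeLieAlgebra K X) 1
  have hA : IsLieAbelian (↥R ⧸ LieIdeal.comap R.incl R.spanCommutatorsIn) :=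
    LieIdeal.isLieAbelian_quotient_of_forall_lie_mem fun x y =>
      LieIdeal.lie_mem_spanCommutatorsIn x.2 y
  have hD : IsLieAbelian (↥(F₂ ⊓ R) ⧸ LieIdeal.comap (F₂ ⊓ R).incl R.spanCommutatorsIn) :=
    LieIdeal.isLieAbelian_quotient_of_forall_lie_mem fun x y =>
      LieIdeal.lie_mem_spanCommutatorsIn x.2.2 y
  have hE : IsLieAbelian (↥R ⧸ LieIdeal.comap R.incl F₂) :=
    LieIdeal.isLieAbelian_quotient_of_forall_lie_mem fun x y =>
      LieAlgebra.lie_mem_derivedSeries_one x.1 y.1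
  obtain ⟨e⟩ := LieIdeal.nonempty_linearEquiv_quotient_prod (I := R)
    LieIdeal.spanCommutatorsIn_le_derivedSeries_one
  exact ⟨hE, ⟨e.toLieEquiv⟩⟩

/-- For a free presentation `L ≅ F/R`, with `J = ⟨K(F) ∩ R⟩` the ideal generated
by the commutators of `F` lying in `R`, set `A = R/J`, `D = (F² ∩ R)/J` and
`E = R/(R ∩ F²)`.  Then `E` is abelian and `A ≅ D ⊕ E`. -/
theorem hopf_ideal_splits
    (K : Type*) [Field K] (X : Type*)
    (L : Type*) [LieRing L] [LieAlgebra K L]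
    (R : LieIdeal K (FreeLieAlgebra K X))
    (hL : Nonempty ((FreeLieAlgebra K X ⧸ R) ≃ₗ⁅K⁆ L))
    (J : LieIdeal K (FreeLieAlgebra K X))
    (hJ : J = LieSubmodule.lieSpan K (FreeLieAlgebra K X)
      {z | (∃ x y : FreeLieAlgebra K X, ⁅x, y⁆ = z) ∧ z ∈ R}) :
    IsLieAbelian
      (↥R ⧸ LieIdeal.comap R.incl (LieAlgebra.derivedSeries K (FreeLieAlgebra K X) 1)) ∧
    Nonempty
      ((↥R ⧸ LieIdeal.comap R.incl J) ≃ₗ⁅K⁆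
        ((↥(LieAlgebra.derivedSeries K (FreeLieAlgebra K X) 1 ⊓ R) ⧸
            LieIdeal.comap (LieAlgebra.derivedSeries K (FreeLieAlgebra K X) 1 ⊓ R).incl J) ×
          (↥R ⧸ LieIdeal.comap R.incl (LieAlgebra.derivedSeries K (FreeLieAlgebra K X) 1)))) :=
  hopf_ideal_splits_general K X R J hJ
end

section
/- Let L be a finite-dimensional Lie algebra. If (T,τ) is a universal element of the category c(L), then T is a CP cover of L, i.e., (T, ker τ) is a CP defining pair of maximal dimension. -/
universe u

/-- `(C, λ)` is a member of the class `c(L)`: `λ : C → L` is surjective with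
`ker λ ⊆ C² ∩ Z(C)` and `ker λ ∩ K(C) = 0`. -/
def IsCPElem {K : Type u} [Field K] {L C : Type u} [LieRing L] [LieAlgebra K L]
    [LieRing C] [LieAlgebra K C] (lam : C →ₗ⁅K⁆ L) : Prop :=
  Function.Surjective lam ∧
    lam.ker ≤ LieAlgebra.derivedSeries K C 1 ⊓ LieAlgebra.center K C ∧
    ∀ x ∈ lam.ker, (∃ y z : C, ⁅y, z⁆ = x) → x = 0

/-- `(C, B)` is a CP defining pair for `L`. -/
def IsCPPair (K : Type u) [Field K] (L C : Type u) [LieRing L] [LieAlgebra K L]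
    [LieRing C] [LieAlgebra K C] (B : LieIdeal K C) : Prop :=
  Nonempty ((C ⧸ B) ≃ₗ⁅K⁆ L) ∧
    B ≤ LieAlgebra.center K C ⊓ LieAlgebra.derivedSeries K C 1 ∧
    ∀ x ∈ B, (∃ y z : C, ⁅y, z⁆ = x) → x = 0

/-! The element `C → C ⧸ B ≅ L` of `c(L)` attached to a CP defining pair `(C, B)` receives a
map `h : T → C` over `L`. Then `C = h(T) + B` with `B ⊆ Z(C) ∩ C²`; modulo a central ideal
brackets only see `h(T)`, so `C² = [h(T), h(T)] ⊆ h(T)`, whence `B ⊆ h(T)` and `h` is onto.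
The same computation for `τ`, with `h(T)` replaced by the span of lifts of a finite generating
set of `L`, shows that `T` is finite-dimensional, so `dim C ≤ dim T`. -/

open LieAlgebra

section CentralExtension

variable {R L : Type*} [CommRing R] [LieRing L] [LieAlgebra R L]

lemma lie_eq_lie_of_sub_mem_center {a b p q : L} (ha : a - p ∈ center R L)
    (hb : b - q ∈ center R L) : ⁅a, b⁆ = ⁅p, q⁆ := by
  have hab : ⁅a - p, b⁆ = 0 := by
    rw [← lie_skew, (LieModule.mem_maxTrivSubmodule R L L _).mp ha, neg_zero]
  have hpb : ⁅p, b - q⁆ = 0 := (LieModule.mem_maxTrivSubmodule R L L _).mp hb p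
  rw [sub_lie, sub_eq_zero] at hab
  rw [lie_sub, sub_eq_zero] at hpb
  rw [hab, hpb]

lemma derivedSeries_one_le_of_forall_sub_mem_center {P Q : Submodule R L}
    (hP : ∀ x : L, ∃ p ∈ P, x - p ∈ center R L) (hPQ : ∀ p ∈ P, ∀ q ∈ P, ⁅p, q⁆ ∈ Q) :
    (derivedSeries R L 1 : Submodule R L) ≤ Q := by
  rw [coe_derivedSeries_one_eq, Submodule.span_le]
  rintro _ ⟨a, b, rfl⟩
  obtain ⟨p, hp, hap⟩ := hP a
  obtain ⟨q, hq, hbq⟩ := hP b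
  rw [lie_eq_lie_of_sub_mem_center hap hbq]
  exact hPQ p hp q hq

lemma LieSubalgebra.eq_top_of_forall_sub_mem {S : LieSubalgebra R L} {B : LieIdeal R L}
    (hB : B ≤ derivedSeries R L 1 ⊓ center R L) (hS : ∀ x : L, ∃ s ∈ S, x - s ∈ B) :
    S = ⊤ := by
  have hder : (derivedSeries R L 1 : Submodule R L) ≤ S.toSubmodule :=
    derivedSeries_one_le_of_forall_sub_mem_center
      (fun x ↦ (hS x).imp fun s ⟨hs, hxs⟩ ↦ ⟨hs, (hB hxs).2⟩)
      (fun p hp q hq ↦ S.lie_mem hp hq)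
  rw [eq_top_iff]
  intro x _
  obtain ⟨s, hs, hxs⟩ := hS x
  simpa using S.add_mem hs (hder (hB hxs).1)

lemma LieHom.surjective_of_surjective_comp {T L' : Type*} [LieRing T] [LieAlgebra R T]
    [LieRing L'] [LieAlgebra R L'] {f : L →ₗ⁅R⁆ L'} {g : T →ₗ⁅R⁆ L}
    (hker : f.ker ≤ derivedSeries R L 1 ⊓ center R L) (hfg : Function.Surjective (f.comp g)) :
    Function.Surjective g := by
  refine (LieHom.range_eq_top g).mp (LieSubalgebra.eq_top_of_forall_sub_mem hker fun x ↦ ?_)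
  obtain ⟨t, ht⟩ := hfg (f x)
  exact ⟨g t, g.mem_range_self t, by simp [← ht]⟩

lemma LieHom.finite_of_surjective_of_ker_le {L' : Type*} [LieRing L'] [LieAlgebra R L']
    [Module.Finite R L'] (f : L →ₗ⁅R⁆ L') (hf : Function.Surjective f)
    (hker : f.ker ≤ derivedSeries R L 1 ⊓ center R L) : Module.Finite R L := by
  obtain ⟨s, hs⟩ := Module.Finite.fg_top (R := R) (M := L')
  choose g hg using hf
  set P := Submodule.span R (g '' s)
  set Q := Submodule.map₂ (ad R L : L →ₗ[R] Module.End R L) P P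
  have hP : ∀ x : L, ∃ p ∈ P, x - p ∈ f.ker := by
    intro x
    have hmap : P.map (f : L →ₗ[R] L') = ⊤ := by
      simp only [P, Submodule.map_span, Set.image_image, LieHom.coe_toLinearMap, hg, Set.image_id',
        hs]
    obtain ⟨p, hp, hpx⟩ := hmap.ge (Submodule.mem_top (x := f x))
    exact ⟨p, hp, by simp [← hpx]⟩
  have hder : (derivedSeries R L 1 : Submodule R L) ≤ Q :=
    derivedSeries_one_le_of_forall_sub_mem_center
      (fun x ↦ (hP x).imp fun p ⟨hp, hxp⟩ ↦ ⟨hp, (hker hxp).2⟩)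
      (fun p hp q hq ↦ Submodule.apply_mem_map₂ _ hp hq)
  have htop : P ⊔ Q = ⊤ := by
    rw [eq_top_iff]
    intro x _
    obtain ⟨p, hp, hxp⟩ := hP x
    simpa using Submodule.add_mem_sup hp (hder (hker hxp).1)
  have hPfg : P.FG := Submodule.fg_span (s.finite_toSet.image g)
  exact ⟨htop ▸ hPfg.sup (hPfg.map₂ _ hPfg)⟩

def LieIdeal.mkHom (I : LieIdeal R L) : L →ₗ⁅R⁆ L ⧸ I :=
  { LieSubmodule.Quotient.mk' I with map_lie' := fun {_ _} ↦ rfl }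

@[simp]
lemma LieIdeal.mkHom_apply (I : LieIdeal R L) (x : L) :
    I.mkHom x = LieSubmodule.Quotient.mk' I x :=
  rfl

end CentralExtension

section CP

variable {K : Type u} [Field K] {L C : Type u} [LieRing L] [LieAlgebra K L]
  [LieRing C] [LieAlgebra K C]

lemma IsCPElem.isCPPair_ker {lam : C →ₗ⁅K⁆ L} (h : IsCPElem lam) : IsCPPair K L C lam.ker := by
  obtain ⟨hsurj, hker, hbr⟩ := h
  have hrange : (lam.range : Set L) = Set.univ := by
    rw [(LieHom.range_eq_top lam).mpr hsurj]; rfl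
  exact ⟨⟨lam.quotKerEquivRange.trans ((LieEquiv.ofEq _ _ hrange).trans LieSubalgebra.topEquiv)⟩,
    inf_comm (derivedSeries K C 1) (center K C) ▸ hker, hbr⟩

lemma IsCPPair.exists_isCPElem_ker_eq {B : LieIdeal K C} (hB : IsCPPair K L C B) :
    ∃ lam : C →ₗ⁅K⁆ L, IsCPElem lam ∧ lam.ker = B := by
  obtain ⟨⟨e⟩, hle, hbr⟩ := hB
  set lam := e.toLieHom.comp B.mkHom
  have hker : lam.ker = B := by
    ext x
    simp [lam]
  refine ⟨lam, ⟨fun y ↦ ?_, hker ▸ inf_comm (center K C) (derivedSeries K C 1) ▸ hle,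
    hker ▸ hbr⟩, hker⟩
  obtain ⟨x, hx⟩ := LieSubmodule.Quotient.surjective_mk' B (e.symm y)
  exact ⟨x, by simp [lam, hx]⟩

end CP

/-- if `(T, τ)` is a universal element of `c(L)` for a finite-dimensional
Lie algebra `L`, then `T` is a CP cover of `L`: `(T, ker τ)` is a CP defining pair of
maximal dimension. -/
theorem universal_element_is_CP_cover
    (K : Type u) [Field K] (L : Type u) [LieRing L] [LieAlgebra K L] [Module.Finite K L]
    (T : Type u) [LieRing T] [LieAlgebra K T] (τ : T →ₗ⁅K⁆ L)
    (hT : IsCPElem τ)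
    (huniv : ∀ (C : Type u) [LieRing C] [LieAlgebra K C] (lam : C →ₗ⁅K⁆ L),
      IsCPElem lam → ∃ h : T →ₗ⁅K⁆ C, lam.comp h = τ) :
    IsCPPair K L T τ.ker ∧
      ∀ (C : Type u) [LieRing C] [LieAlgebra K C] (B : LieIdeal K C),
        IsCPPair K L C B → Module.finrank K C ≤ Module.finrank K T := by
  have : Module.Finite K T := τ.finite_of_surjective_of_ker_le hT.1 hT.2.1
  refine ⟨hT.isCPPair_ker, fun C _ _ B hB ↦ ?_⟩
  obtain ⟨lam, hlam, rfl⟩ := hB.exists_isCPElem_ker_eq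
  obtain ⟨h, hh⟩ := huniv C lam hlam
  have hsurj : Function.Surjective h :=
    LieHom.surjective_of_surjective_comp hlam.2.1 (hh ▸ hT.1)
  exact LinearMap.finrank_le_finrank_of_surjective (f := h.toLinearMap) hsurj
end

section
/- Let G and H be groups (respectively Lie rings) fitting in a central extension 1 → N → G → Q → 1. The extension is a CP extension (i.e., commuting pairs in Q lift to commuting pairs in G) if and only if χ(N) ∩ K(G) = 1, where K(G) is the set of commutators of G and χ : N → G the inclusion. -/
/-!
Modulo a central kernel the commutator `⁅y, z⁆` depends only on `π y` and `π z`, and it lies in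
the kernel exactly when `π y` and `π z` commute. Hence a commuting pair of `Q` has commuting lifts
iff the commutator of arbitrary lifts, an element of `χ(N) ∩ K(G)`, is trivial.
-/

open scoped commutatorElement

namespace Subgroup

variable {G : Type*} [Group G]

theorem commutatorElement_mul_mem_center {a b c d : G} (hc : c ∈ center G) (hd : d ∈ center G) :
    ⁅a * c, b * d⁆ = ⁅a, b⁆ := by
  rw [mem_center_iff] at hc hd
  simp only [commutatorElement_def, mul_inv_rev]
  calc a * c * (b * d) * (c⁻¹ * a⁻¹) * (d⁻¹ * b⁻¹)
      = a * (b * d * c) * (c⁻¹ * a⁻¹) * (d⁻¹ * b⁻¹) := by rw [hc (b * d)]; group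
    _ = a * b * (d * a⁻¹) * d⁻¹ * b⁻¹ := by group
    _ = a * b * a⁻¹ * b⁻¹ := by rw [← hd a⁻¹]; group

end Subgroup

namespace MonoidHom

variable {G Q : Type*} [Group G] [Group Q] (π : G →* Q)

theorem commutatorElement_mem_ker_iff (y z : G) : ⁅y, z⁆ ∈ π.ker ↔ Commute (π y) (π z) := by
  rw [mem_ker, map_commutatorElement, commutatorElement_eq_one_iff_commute]

theorem commutatorElement_eq_of_map_eq (hker : π.ker ≤ Subgroup.center G) {y z y' z' : G}
    (hy : π y' = π y) (hz : π z' = π z) : ⁅y, z⁆ = ⁅y', z'⁆ := by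
  have mem_center {g g' : G} (h : π g' = π g) : g'⁻¹ * g ∈ Subgroup.center G :=
    hker (by rw [mem_ker, map_mul, map_inv, h, inv_mul_cancel])
  calc ⁅y, z⁆ = ⁅y' * (y'⁻¹ * y), z' * (z'⁻¹ * z)⁆ := by simp only [mul_inv_cancel_left]
    _ = ⁅y', z'⁆ := Subgroup.commutatorElement_mul_mem_center (mem_center hy) (mem_center hz)

end MonoidHom

theorem central_extension_cp_iff_general
    (N G Q : Type*) [Group N] [Group G] [Group Q]
    (χ : N →* G) (π : G →* Q)
    (hπ : Function.Surjective π)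
    (hexact : π.ker = χ.range)
    (hcentral : χ.range ≤ Subgroup.center G) :
    (∀ a b : Q, a * b = b * a →
        ∃ a' b' : G, π a' = a ∧ π b' = b ∧ a' * b' = b' * a') ↔
      ∀ x ∈ χ.range, (∃ y z : G, ⁅y, z⁆ = x) → x = 1 := by
  rw [← hexact] at hcentral ⊢
  constructor
  · rintro hCP x hx ⟨y, z, rfl⟩
    obtain ⟨y', z', hy, hz, hcomm⟩ :=
      hCP (π y) (π z) ((π.commutatorElement_mem_ker_iff y z).mp hx)
    rw [π.commutatorElement_eq_of_map_eq hcentral hy hz]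
    exact commutatorElement_eq_one_iff_mul_comm.mpr hcomm
  · rintro hK a b hab
    obtain ⟨a', rfl⟩ := hπ a
    obtain ⟨b', rfl⟩ := hπ b
    have hker : ⁅a', b'⁆ ∈ π.ker := (π.commutatorElement_mem_ker_iff a' b').mpr hab
    exact ⟨a', b', rfl, rfl, commutatorElement_eq_one_iff_mul_comm.mp (hK _ hker ⟨a', b', rfl⟩)⟩

/-- a central extension `1 → N → G → Q → 1` of groups is a CP extension
(commuting pairs of `Q` have commuting lifts in `G`) if and only if `χ(N) ∩ K(G) = 1`,
where `K(G)` is the set of commutators of `G`. -/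
theorem central_extension_cp_iff
    (N G Q : Type*) [Group N] [Group G] [Group Q]
    (χ : N →* G) (π : G →* Q)
    (hχ : Function.Injective χ) (hπ : Function.Surjective π)
    (hexact : π.ker = χ.range)
    (hcentral : χ.range ≤ Subgroup.center G) :
    (∀ a b : Q, a * b = b * a →
        ∃ a' b' : G, π a' = a ∧ π b' = b ∧ a' * b' = b' * a') ↔
      ∀ x ∈ χ.range, (∃ y z : G, ⁅y, z⁆ = x) → x = 1 :=
  central_extension_cp_iff_general N G Q χ π hπ hexact hcentral
end

section
/- Let L be the Lie ring over ℤ/pℤ-coefficients (p ≥ 5) with presentation generated by v, v₁, v₂, v₃ subject to [v₁,v] = v₂ - v₃/2, [v₂,v] = v₃, pv₁ = pv₂ = pv₃ = 0, v₃ = p²v (a p-Lie ring of order p⁵ and nilpotency class 3). Then the Bogomolov multiplier B̃₀(L) is trivial. -/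
/-!
Write `F` for the free Lie ring on `v₀, …, v₃`, `R` for the ideal of relations and `S` for the
ideal generated by the commutators lying in `R`. Since `[F, R] ⊆ S` and the three commutator
relators lie in `S`, every element of `R` is an integral combination of the seven remaining
relators plus an element of `S`. If it also lies in `F²`, its image in `F/F² = ℤ⁴` vanishes; for
`p ≠ 0` this forces the combination to equal `a [p v₁, v₀] + b [p v₂, v₀]`, a sum of
commutators of elements of `R` with `F`, hence an element of `S`.
-/

open LieSubmodule

section

variable {R L : Type*} [CommRing R] [LieRing L] [LieAlgebra R L]

/-- The set `K(L) ∩ I` of the paper. -/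
def LieIdeal.commutatorsIn (I : LieIdeal R L) : Set L :=
  {z | (∃ x y : L, ⁅x, y⁆ = z) ∧ z ∈ I}

theorem LieIdeal.lie_mem_lieSpan_commutatorsIn (I : LieIdeal R L) {r : L} (hr : r ∈ I) (y : L) :
    ⁅r, y⁆ ∈ lieSpan R L I.commutatorsIn :=
  subset_lieSpan ⟨⟨r, y, rfl⟩, lie_mem_left _ _ I r y hr⟩

theorem LieIdeal.lie_top_le_lieSpan_commutatorsIn (I : LieIdeal R L) :
    ⁅(⊤ : LieIdeal R L), I⁆ ≤ lieSpan R L I.commutatorsIn := by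
  rw [lieIdeal_oper_eq_span]
  refine lieSpan_mono ?_
  rintro _ ⟨x, r, rfl⟩
  exact ⟨⟨x, r, rfl⟩, I.lie_mem r.2⟩

theorem LieIdeal.lieSpan_commutatorsIn_le_derivedSeries_one (I : LieIdeal R L) :
    lieSpan R L I.commutatorsIn ≤ LieAlgebra.derivedSeries R L 1 := by
  rw [lieSpan_le]
  rintro _ ⟨⟨x, y, rfl⟩, -⟩
  exact lie_mem_lie (mem_top x) (mem_top y)

theorem LinearMap.map_eq_zero_of_mem_derivedSeries_one {M : Type*} [AddCommGroup M] [Module R M]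
    (f : L →ₗ[R] M) (hf : ∀ x y : L, f ⁅x, y⁆ = 0) {x : L}
    (hx : x ∈ LieAlgebra.derivedSeries R L 1) : f x = 0 := by
  have hker : (LieAlgebra.derivedSeries R L 1 : Submodule R L) ≤ LinearMap.ker f := by
    rw [LieAlgebra.coe_derivedSeries_one_eq, Submodule.span_le]
    rintro _ ⟨y, z, rfl⟩
    exact hf y z
  exact hker hx

theorem LieSubmodule.lieSpan_le_span_sup_lie_top {M : Type*} [AddCommGroup M] [Module R M]
    [LieRingModule L M] (s : Set M) :
    (lieSpan R L s : Submodule R M) ≤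
      Submodule.span R s ⊔ (⁅(⊤ : LieIdeal R L), lieSpan R L s⁆ : LieSubmodule R L M) := by
  have hle : Submodule.span R s ⊔ (⁅(⊤ : LieIdeal R L), lieSpan R L s⁆ : LieSubmodule R L M) ≤
      lieSpan R L s :=
    sup_le submodule_span_le_lieSpan (lie_le_right _ ⊤)
  let U : LieSubmodule R L M :=
    { toSubmodule :=
        Submodule.span R s ⊔ (⁅(⊤ : LieIdeal R L), lieSpan R L s⁆ : LieSubmodule R L M)
      lie_mem := fun {x _} hm => Submodule.mem_sup_right (lie_mem_lie (mem_top x) (hle hm)) }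
  exact (lieSpan_le (N := U)).mpr fun m hm => Submodule.mem_sup_left (Submodule.subset_span hm)

end

noncomputable section

namespace BogomolovExampleOne

local notation "F" => FreeLieAlgebra ℤ (Fin 4)
local notation "v" => (FreeLieAlgebra.of ℤ : Fin 4 → FreeLieAlgebra ℤ (Fin 4))

def relatorSet (p : ℕ) : Set F :=
  {⁅v 1, v 0⁆ - v 2 + ((p + 1) / 2) • v 3,
   ⁅v 2, v 0⁆ - v 3,
   v 3 - p ^ 2 • v 0,
   p • v 1, p • v 2, p • v 3, p ^ 3 • v 0,
   ⁅v 2, v 1⁆, ⁅v 3, v 1⁆, ⁅v 3, v 2⁆}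

/-- The relators in `relatorSet p` other than the three commutators. -/
def relator (p : ℕ) : Fin 7 → F :=
  ![⁅v 1, v 0⁆ - v 2 + ((p + 1) / 2) • v 3, ⁅v 2, v 0⁆ - v 3, v 3 - p ^ 2 • v 0,
    p • v 1, p • v 2, p • v 3, p ^ 3 • v 0]

local notation "S" p => lieSpan ℤ F (LieIdeal.commutatorsIn (lieSpan ℤ F (relatorSet p)))

theorem lieSpan_relatorSet_le (p : ℕ) :
    (lieSpan ℤ F (relatorSet p) : Submodule ℤ F) ≤
      Submodule.span ℤ (Set.range (relator p)) ⊔ ((S p) : Submodule ℤ F) := by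
  have hcomm : ∀ i j : Fin 4, ⁅v i, v j⁆ ∈ relatorSet p → ⁅v i, v j⁆ ∈ S p := fun i j h =>
    subset_lieSpan ⟨⟨v i, v j, rfl⟩, subset_lieSpan h⟩
  have hrel : ∀ i,
      relator p i ∈ Submodule.span ℤ (Set.range (relator p)) ⊔ ((S p) : Submodule ℤ F) :=
    fun i => Submodule.mem_sup_left (Submodule.subset_span ⟨i, rfl⟩)
  refine (lieSpan_le_span_sup_lie_top _).trans (sup_le ?_ ?_)
  · rw [Submodule.span_le]
    rintro z (rfl | rfl | rfl | rfl | rfl | rfl | rfl | rfl | rfl | rfl)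
    · exact hrel 0
    · exact hrel 1
    · exact hrel 2
    · exact hrel 3
    · exact hrel 4
    · exact hrel 5
    · exact hrel 6
    · exact Submodule.mem_sup_right (hcomm 2 1 (by simp [relatorSet]))
    · exact Submodule.mem_sup_right (hcomm 3 1 (by simp [relatorSet]))
    · exact Submodule.mem_sup_right (hcomm 3 2 (by simp [relatorSet]))
  · exact le_sup_of_le_right (LieIdeal.lie_top_le_lieSpan_commutatorsIn _)

section Abelianization

attribute [local instance] LieRing.ofAssociativeRing

def toAbelianization : F →ₗ⁅ℤ⁆ (Fin 4 → ℤ) :=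
  FreeLieAlgebra.lift ℤ fun i => Pi.single i 1

theorem toAbelianization_of (i : Fin 4) : toAbelianization (v i) = Pi.single i 1 :=
  FreeLieAlgebra.lift_of_apply _ _

theorem toAbelianization_lie (x y : F) : toAbelianization ⁅x, y⁆ = 0 := by
  rw [LieHom.map_lie, LieRing.of_associative_ring_bracket, mul_comm, sub_self]

theorem toAbelianization_sum_relator (p : ℕ) (a : Fin 7 → ℤ) :
    toAbelianization (∑ i, a i • relator p i) =
      ![-(a 2 * p ^ 2) + a 6 * p ^ 3, a 3 * p, -a 0 + a 4 * p,
        a 0 * ((p + 1) / 2 : ℕ) - a 1 + a 2 + a 5 * p] := by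
  simp only [Fin.sum_univ_seven, relator, Matrix.cons_val, map_add, map_sub, map_zsmul, map_nsmul,
    toAbelianization_lie, toAbelianization_of]
  ext j
  fin_cases j <;> simp
  ring

theorem sum_relator_eq_of_toAbelianization_eq_zero {p : ℕ} (hp : p ≠ 0) (a : Fin 7 → ℤ)
    (h : toAbelianization (∑ i, a i • relator p i) = 0) :
    ∑ i, a i • relator p i =
      a 4 • ⁅p • v 1, v 0⁆ + (a 4 * ((p + 1) / 2 : ℕ) + a 5 + a 6) • ⁅p • v 2, v 0⁆ := by
  rw [toAbelianization_sum_relator] at h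
  have e0 := congrFun h 0
  have e1 := congrFun h 1
  have e2 := congrFun h 2
  have e3 := congrFun h 3
  simp only [Matrix.cons_val, Pi.zero_apply] at e0 e1 e2 e3
  have hp' : (p : ℤ) ≠ 0 := Int.natCast_ne_zero.mpr hp
  have ha3 : a 3 = 0 := (mul_eq_zero.mp e1).resolve_right hp'
  have ha0 : a 0 = a 4 * p := by linear_combination -e2
  have ha2 : a 2 = a 6 * p := mul_right_cancel₀ (pow_ne_zero 2 hp') (by linear_combination -e0)
  have ha1 : a 1 = (a 4 * ((p + 1) / 2 : ℕ) + a 5 + a 6) * p := by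
    linear_combination -e3 + (((p + 1) / 2 : ℕ) : ℤ) * ha0 + ha2
  simp only [Fin.sum_univ_seven, relator, Matrix.cons_val, ← Nat.cast_smul_eq_nsmul ℤ,
    Nat.cast_pow, smul_lie]
  rw [ha0, ha1, ha2, ha3]
  module

theorem sum_relator_mem_of_mem_derivedSeries_one {p : ℕ} (hp : p ≠ 0) (a : Fin 7 → ℤ)
    (h : ∑ i, a i • relator p i ∈ LieAlgebra.derivedSeries ℤ F 1) :
    ∑ i, a i • relator p i ∈ S p := by
  have hzero := toAbelianization.toLinearMap.map_eq_zero_of_mem_derivedSeries_one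
    toAbelianization_lie h
  have hcomm : ∀ i, p • v i ∈ relatorSet p → ⁅p • v i, v 0⁆ ∈ S p := fun i hi =>
    LieIdeal.lie_mem_lieSpan_commutatorsIn _ (subset_lieSpan hi) _
  rw [sum_relator_eq_of_toAbelianization_eq_zero hp a hzero]
  exact add_mem (SMulMemClass.smul_mem _ (hcomm 1 (by simp [relatorSet])))
    (SMulMemClass.smul_mem _ (hcomm 2 (by simp [relatorSet])))

end Abelianization

end BogomolovExampleOne

end

theorem bogomolov_trivial_example_one_general (p : ℕ) (hp : p.Prime)
    (v : Fin 4 → FreeLieAlgebra ℤ (Fin 4)) (hv : v = FreeLieAlgebra.of ℤ)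
    (R : LieIdeal ℤ (FreeLieAlgebra ℤ (Fin 4)))
    (hR : R = LieSubmodule.lieSpan ℤ (FreeLieAlgebra ℤ (Fin 4))
      {⁅v 1, v 0⁆ - v 2 + ((p + 1) / 2) • v 3,
       ⁅v 2, v 0⁆ - v 3,
       v 3 - p ^ 2 • v 0,
       p • v 1, p • v 2, p • v 3, p ^ 3 • v 0,
       ⁅v 2, v 1⁆, ⁅v 3, v 1⁆, ⁅v 3, v 2⁆}) :
    R ⊓ LieAlgebra.derivedSeries ℤ (FreeLieAlgebra ℤ (Fin 4)) 1 ≤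
      LieSubmodule.lieSpan ℤ (FreeLieAlgebra ℤ (Fin 4))
        {z | (∃ x y : FreeLieAlgebra ℤ (Fin 4), ⁅x, y⁆ = z) ∧ z ∈ R} := by
  subst hv
  obtain rfl : R = lieSpan ℤ _ (BogomolovExampleOne.relatorSet p) := hR
  rintro x ⟨hxR, hxD⟩
  obtain ⟨t, ht, s, hs, rfl⟩ :=
    Submodule.mem_sup.mp (BogomolovExampleOne.lieSpan_relatorSet_le p hxR)
  obtain ⟨a, rfl⟩ := (Submodule.mem_span_range_iff_exists_fun ℤ).mp ht
  have hsD := LieIdeal.lieSpan_commutatorsIn_le_derivedSeries_one _ hs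
  have htD : ∑ i, a i • BogomolovExampleOne.relator p i ∈
      LieAlgebra.derivedSeries ℤ (FreeLieAlgebra ℤ (Fin 4)) 1 := by
    simpa using sub_mem hxD hsD
  exact add_mem (BogomolovExampleOne.sum_relator_mem_of_mem_derivedSeries_one hp.ne_zero a htD) hs

/-- the `p`-Lie ring (`p ≥ 5`) of order `p⁵` and class `3` presented by
generators `v, v₁, v₂, v₃` and relations `[v₁,v] = v₂ - v₃/2`, `[v₂,v] = v₃`, `v₃ = p²v`,
`pv₁ = pv₂ = pv₃ = 0` (other brackets of generators trivial; `1/2` is realised as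
`(p+1)/2` modulo the `p`-torsion) has trivial Bogomolov multiplier: by the Hopf-type
formula, `R ∩ F² ⊆ ⟨K(F) ∩ R⟩`. -/
theorem bogomolov_trivial_example_one (p : ℕ) (hp : p.Prime) (hp5 : 5 ≤ p)
    (v : Fin 4 → FreeLieAlgebra ℤ (Fin 4)) (hv : v = FreeLieAlgebra.of ℤ)
    (R : LieIdeal ℤ (FreeLieAlgebra ℤ (Fin 4)))
    (hR : R = LieSubmodule.lieSpan ℤ (FreeLieAlgebra ℤ (Fin 4))
      {⁅v 1, v 0⁆ - v 2 + ((p + 1) / 2) • v 3,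
       ⁅v 2, v 0⁆ - v 3,
       v 3 - p ^ 2 • v 0,
       p • v 1, p • v 2, p • v 3, p ^ 3 • v 0,
       ⁅v 2, v 1⁆, ⁅v 3, v 1⁆, ⁅v 3, v 2⁆}) :
    R ⊓ LieAlgebra.derivedSeries ℤ (FreeLieAlgebra ℤ (Fin 4)) 1 ≤
      LieSubmodule.lieSpan ℤ (FreeLieAlgebra ℤ (Fin 4))
        {z | (∃ x y : FreeLieAlgebra ℤ (Fin 4), ⁅x, y⁆ = z) ∧ z ∈ R} :=
  bogomolov_trivial_example_one_general p hp v hv R hR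
end
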